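/- arXiv:1405.5620 — 2 statements merged into one kernel-verified Lean document; each statement's English description precedes it below -/
import Mathlib

section
/- For integers q, n, k with 1 ≤ k < n, the number of elements x of C_{n,k} with x^q = 1 satisfies: OD_q(C_{n,k}) = [k ∣ q]·OD_q(S_{n-k}) + (n-k)·OD_q(C_{n,k+1}). -/
def cosetC (n k : ℕ) : Set (Equiv.Perm (Fin n)) :=
  {σ | ∃ g : Equiv.Perm (Fin n), (∀ i : Fin n, (i : ℕ) < k - 1 → g i = i) ∧
    σ = g * ((List.finRange n).take k).formPerm}

/-
Indices are 0-based: `initCycle n k` is the cycle `c_k = (0 1 … k-1)` and `stabBelow n m` is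
`G_{n,m}`, the pointwise stabiliser of `0, …, m-1`; thus `cosetC n k = G_{n,k-1} c_k`.

Sort `σ = g c_k ∈ C_{n,k}` by the pivot `j = g (k-1)`, which is either `k-1` or some `j ≥ k`. If
`j = k-1`, then `g ∈ G_{n,k}` is disjoint from `c_k`, so `σ` has order `lcm (orderOf g) k`, and
`G_{n,k} ≅ S_{n-k}`. If `j ≥ k`, conjugation by `(k-1 k)(k j)` maps the fibre onto `C_{n,k+1}`,
because `c_{k+1} = c_k (k-1 k)` and `(k j)` commutes with `c_k`; conjugation preserves orders, and
there are `n - k` such `j`.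
-/

open Equiv Equiv.Perm MulAction

theorem Set.ncard_eq_sum_ncard_fiberwise {α β : Type*} [Finite α] {s : Set α}
    {f : α → β} {t : Finset β} (h : ∀ x ∈ s, f x ∈ t) :
    s.ncard = ∑ b ∈ t, {x ∈ s | f x = b}.ncard := by
  classical
  have := Fintype.ofFinite α
  simp only [Set.ncard_eq_toFinset_card']
  rw [Finset.card_eq_sum_card_fiberwise fun x hx => by simpa using h x (by simpa using hx)]
  refine Finset.sum_congr rfl fun b _ => congrArg Finset.card ?_
  ext
  simp

theorem ncard_image_sep_orderOf_dvd {G H : Type*} [Monoid G] [Monoid H] {f : G →* H}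
    (hf : Function.Injective f) (s : Set G) (q : ℕ) :
    {h ∈ f '' s | orderOf h ∣ q}.ncard = {g ∈ s | orderOf g ∣ q}.ncard := by
  have himage : {h ∈ f '' s | orderOf h ∣ q} = f '' {g ∈ s | orderOf g ∣ q} := by
    ext h
    constructor
    · rintro ⟨⟨g, hg, rfl⟩, hq⟩
      exact ⟨g, ⟨hg, by rwa [orderOf_injective f hf] at hq⟩, rfl⟩
    · rintro ⟨g, ⟨hg, hq⟩, rfl⟩
      exact ⟨⟨g, hg, rfl⟩, by rwa [orderOf_injective f hf]⟩
  rw [himage, Set.ncard_image_of_injective _ hf]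

namespace CosetC

variable {n k : ℕ}

abbrev initCycle (n k : ℕ) : Perm (Fin n) := ((List.finRange n).take k).formPerm

theorem initCycle_apply_of_le {i : Fin n} (h : k ≤ i) : initCycle n k i = i := by
  refine List.formPerm_apply_of_notMem fun hi => ?_
  obtain ⟨m, hm, rfl⟩ := List.mem_iff_getElem.1 hi
  simp only [List.length_take, List.length_finRange, lt_inf_iff, List.getElem_take,
    List.getElem_finRange, Fin.cast_mk] at hm h
  omega

theorem orderOf_initCycle (hk : 1 ≤ k) (hkn : k ≤ n) : orderOf (initCycle n k) = k := by
  have hnodup : ((List.finRange n).take k).Nodup :=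
    (List.nodup_finRange n).sublist (List.take_sublist _ _)
  have hlen : ((List.finRange n).take k).length = k := by simp [hkn]
  obtain rfl | hk2 := hk.eq_or_lt
  · rw [initCycle, (List.formPerm_eq_one_iff _ hnodup).2 hlen.le, orderOf_one]
  · rw [(List.isCycle_formPerm hnodup (by omega)).orderOf,
      List.support_formPerm_of_nodup _ hnodup, List.toFinset_card_of_nodup hnodup, hlen]
    intro x hx
    have := congrArg List.length hx
    rw [hlen, List.length_singleton] at this
    omega

theorem initCycle_succ (hk : 1 ≤ k) (hkn : k < n) :
    initCycle n (k + 1) = initCycle n k * swap ⟨k - 1, by omega⟩ ⟨k, hkn⟩ := by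
  obtain ⟨m, rfl⟩ : ∃ m, k = m + 1 := ⟨k - 1, by omega⟩
  have htake : (List.finRange n).take (m + 2) =
      (List.finRange n).take m ++ [⟨m, by omega⟩, ⟨m + 1, hkn⟩] := by
    rw [List.take_add_one, List.take_add_one]
    simp [show m < n by omega, hkn]
  unfold initCycle
  rw [htake, List.formPerm_append_pair, List.take_add_one]
  simp [show m < n by omega]

abbrev stabBelow (n m : ℕ) : Subgroup (Perm (Fin n)) :=
  fixingSubgroup (Perm (Fin n)) {i : Fin n | (i : ℕ) < m}

section stabBelow

variable {m : ℕ} {g : Perm (Fin n)}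

theorem mem_stabBelow : g ∈ stabBelow n m ↔ ∀ i : Fin n, (i : ℕ) < m → g i = i := by
  simp [mem_fixingSubgroup_iff, Perm.smul_def]

theorem mem_stabBelow_succ (hm : m < n) :
    g ∈ stabBelow n (m + 1) ↔ g ∈ stabBelow n m ∧ g ⟨m, hm⟩ = ⟨m, hm⟩ := by
  simp only [mem_stabBelow]
  refine ⟨fun h => ⟨fun i hi => h i (by omega), h _ (by simp)⟩, fun ⟨h, hlast⟩ i hi => ?_⟩
  obtain hi | rfl := Nat.lt_succ_iff_lt_or_eq.1 hi
  · exact h i hi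
  · exact hlast

theorem le_apply_of_mem_stabBelow (hg : g ∈ stabBelow n m) {i : Fin n} (hi : m ≤ i) :
    m ≤ g i := by
  by_contra! h
  have := g.injective (mem_stabBelow.1 hg (g i) h)
  omega

theorem disjoint_initCycle_of_mem_stabBelow (hg : g ∈ stabBelow n k) :
    g.Disjoint (initCycle n k) := fun i =>
  (lt_or_ge (i : ℕ) k).imp (mem_stabBelow.1 hg i) initCycle_apply_of_le

theorem orderOf_mul_initCycle (hk : 1 ≤ k) (hkn : k ≤ n) (hg : g ∈ stabBelow n k) :
    orderOf (g * initCycle n k) = (orderOf g).lcm k := by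
  rw [(disjoint_initCycle_of_mem_stabBelow hg).orderOf, orderOf_initCycle hk hkn]

end stabBelow

theorem ncard_stabBelow_orderOf_dvd (hkn : k ≤ n) (q : ℕ) :
    {g ∈ (stabBelow n k : Set (Perm (Fin n))) | orderOf g ∣ q}.ncard =
      {τ : Perm (Fin (n - k)) | orderOf τ ∣ q}.ncard := by
  let p : Fin n → Prop := fun x => k ≤ (x : ℕ)
  have hcard : Fintype.card (Fin (n - k)) = Fintype.card (Subtype p) := by
    simp_rw [p, ← not_lt]
    rw [Fintype.card_subtype_compl, Fintype.card_fin_lt_of_le hkn, Fintype.card_fin,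
      Fintype.card_fin]
  let e := (Fintype.equivOfCardEq hcard).permCongrHom
  have hstab : (stabBelow n k : Set (Perm (Fin n))) =
      (ofSubtype : Perm (Subtype p) →* Perm (Fin n)) '' Set.univ := by
    ext g
    rw [SetLike.mem_coe, mem_stabBelow, Set.image_univ]
    constructor
    · intro hg
      obtain ⟨τ, hτ⟩ := (Perm.subtypeEquivSubtypePerm p).surjective
        ⟨g, fun a ha => hg a (not_le.1 ha)⟩
      exact ⟨τ, congrArg Subtype.val hτ⟩
    · rintro ⟨τ, rfl⟩ i hi
      exact ofSubtype_apply_of_not_mem τ (not_le.2 hi)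
  rw [hstab, ncard_image_sep_orderOf_dvd ofSubtype_injective,
    ← Set.image_univ_of_surjective e.surjective, ← e.coe_toMonoidHom,
    ncard_image_sep_orderOf_dvd e.injective, Set.sep_univ]

theorem mem_cosetC_iff {σ : Perm (Fin n)} :
    σ ∈ cosetC n k ↔ σ * (initCycle n k)⁻¹ ∈ stabBelow n (k - 1) := by
  rw [mem_stabBelow]
  constructor
  · rintro ⟨g, hg, rfl⟩
    simpa using hg
  · exact fun h => ⟨_, h, by simp⟩

def pivot (hkn : k < n) (σ : Perm (Fin n)) : Fin n :=
  (σ * (initCycle n k)⁻¹) ⟨k - 1, by omega⟩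

def cosetFiber (hkn : k < n) (j : Fin n) : Set (Perm (Fin n)) :=
  {σ ∈ cosetC n k | pivot hkn σ = j}

variable {σ : Perm (Fin n)}

theorem le_pivot (hkn : k < n) (hσ : σ ∈ cosetC n k) : k - 1 ≤ pivot hkn σ :=
  le_apply_of_mem_stabBelow (mem_cosetC_iff.1 hσ) le_rfl

theorem ncard_cosetC_eq_sum_fibers (hkn : k < n) (q : ℕ) :
    {σ ∈ cosetC n k | orderOf σ ∣ q}.ncard =
      ∑ j ∈ Finset.Ici (⟨k - 1, by omega⟩ : Fin n),
        {σ ∈ cosetFiber hkn j | orderOf σ ∣ q}.ncard := by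
  rw [Set.ncard_eq_sum_ncard_fiberwise (t := Finset.Ici (⟨k - 1, by omega⟩ : Fin n))
    fun σ hσ => Finset.mem_Ici.2 (le_pivot hkn hσ.1)]
  exact Finset.sum_congr rfl fun j _ => congrArg Set.ncard (Set.ext fun _ => and_right_comm)

theorem mem_cosetFiber_self_iff (hk : 1 ≤ k) (hkn : k < n) :
    σ ∈ cosetFiber hkn ⟨k - 1, by omega⟩ ↔ σ * (initCycle n k)⁻¹ ∈ stabBelow n k := by
  obtain ⟨m, rfl⟩ : ∃ m, k = m + 1 := ⟨k - 1, by omega⟩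
  simp only [cosetFiber, Set.mem_ofPred_eq, mem_cosetC_iff, pivot, Nat.add_sub_cancel,
    mem_stabBelow_succ (show m < n by omega)]

theorem ncard_cosetFiber_self (hk : 1 ≤ k) (hkn : k < n) (q : ℕ) :
    {σ ∈ cosetFiber hkn ⟨k - 1, by omega⟩ | orderOf σ ∣ q}.ncard =
      (if k ∣ q then 1 else 0) * {τ : Perm (Fin (n - k)) | orderOf τ ∣ q}.ncard := by
  have himage : {σ ∈ cosetFiber hkn ⟨k - 1, by omega⟩ | orderOf σ ∣ q} =
      (· * initCycle n k) ''
        {g ∈ (stabBelow n k : Set (Perm (Fin n))) | (orderOf g).lcm k ∣ q} := by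
    ext σ
    constructor
    · rintro ⟨hσ, hq⟩
      have hg := (mem_cosetFiber_self_iff hk hkn).1 hσ
      refine ⟨_, ⟨hg, ?_⟩, inv_mul_cancel_right σ _⟩
      rwa [← orderOf_mul_initCycle hk hkn.le hg, inv_mul_cancel_right]
    · rintro ⟨g, ⟨hg, hq⟩, rfl⟩
      refine ⟨(mem_cosetFiber_self_iff hk hkn).2 (by simpa using hg), ?_⟩
      rwa [orderOf_mul_initCycle hk hkn.le hg]
  rw [himage, Set.ncard_image_of_injective _ (mul_left_injective _)]
  simp_rw [Nat.lcm_dvd_iff]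
  split_ifs with hkq
  · simpa only [hkq, and_true, one_mul] using ncard_stabBelow_orderOf_dvd hkn.le q
  · simp [hkq]

def fiberConj (hkn : k < n) (j : Fin n) : Perm (Fin n) :=
  swap ⟨k - 1, by omega⟩ ⟨k, hkn⟩ * swap ⟨k, hkn⟩ j

theorem mem_cosetFiber_iff_conj_mem (hk : 1 ≤ k) (hkn : k < n) {j : Fin n} (hj : k ≤ j) :
    σ ∈ cosetFiber hkn j ↔ MulAut.conj (fiberConj hkn j) σ ∈ cosetC n (k + 1) := by
  rw [fiberConj]
  set s : Perm (Fin n) := swap ⟨k - 1, by omega⟩ ⟨k, hkn⟩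
  set t : Perm (Fin n) := swap ⟨k, hkn⟩ j
  set g := σ * (initCycle n k)⁻¹
  have hs : ∀ i : Fin n, (i : ℕ) < k - 1 → s i = i := fun i hi =>
    swap_apply_of_ne_of_ne (Fin.ne_of_lt hi) (Fin.ne_of_lt (show (i : ℕ) < k by omega))
  have ht : t ∈ stabBelow n k := mem_stabBelow.2 fun i hi =>
    swap_apply_of_ne_of_ne (Fin.ne_of_lt hi) (Fin.ne_of_lt (show (i : ℕ) < j by omega))
  have hconj : MulAut.conj (s * t) σ * (initCycle n (k + 1))⁻¹ = s * t * g * t := by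
    have hcomm := (disjoint_initCycle_of_mem_stabBelow ht).commute.inv_right
    rw [MulAut.conj_apply, initCycle_succ hk hkn, mul_inv_rev, mul_inv_rev, swap_inv, swap_inv]
    simp only [g, s, t, mul_assoc, swap_mul_self_mul, hcomm.eq]
  have hfix : ∀ i : Fin n, (i : ℕ) < k → ((s * t * g * t) i = i ↔ g i = t (s i)) := by
    intro i hi
    rw [mul_apply, mul_apply, mul_apply, mem_stabBelow.1 ht i hi, ← mul_apply s t,
      ← Perm.eq_inv_iff_eq, mul_inv_rev, swap_inv, swap_inv, mul_apply]
    exact Iff.rfl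
  obtain ⟨m, rfl⟩ : ∃ m, k = m + 1 := ⟨k - 1, by omega⟩
  simp only [Nat.add_sub_cancel] at hs
  rw [mem_cosetC_iff, Nat.add_sub_cancel, hconj, mem_stabBelow_succ (show m < n by omega),
    cosetFiber, Set.mem_ofPred_eq, mem_cosetC_iff, pivot]
  simp only [Nat.add_sub_cancel, mem_stabBelow]
  refine and_congr (forall₂_congr fun i hi => ?_) ?_
  · rw [hfix i (by omega), hs i hi, mem_stabBelow.1 ht i (by omega)]
  · rw [hfix _ (by simp)]
    simp [g, s, t]

theorem ncard_cosetFiber_of_le (hk : 1 ≤ k) (hkn : k < n) {j : Fin n} (hj : k ≤ j) (q : ℕ) :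
    {σ ∈ cosetFiber hkn j | orderOf σ ∣ q}.ncard =
      {σ ∈ cosetC n (k + 1) | orderOf σ ∣ q}.ncard := by
  have himage : cosetFiber hkn j =
      (MulAut.conj (fiberConj hkn j)⁻¹).toMonoidHom '' cosetC n (k + 1) := by
    ext σ
    rw [mem_cosetFiber_iff_conj_mem hk hkn hj]
    constructor
    · exact fun h => ⟨_, h, by simp [mul_assoc]⟩
    · rintro ⟨τ, hτ, rfl⟩
      simpa [mul_assoc] using hτ
  rw [himage, ncard_image_sep_orderOf_dvd (MulAut.conj _).injective]

end CosetC

open CosetC in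
theorem stmt_5 (q n k : ℕ) (hk : 1 ≤ k) (hkn : k < n) :
    {σ ∈ cosetC n k | orderOf σ ∣ q}.ncard =
      (if k ∣ q then 1 else 0) *
          {σ : Equiv.Perm (Fin (n - k)) | orderOf σ ∣ q}.ncard +
        (n - k) * {σ ∈ cosetC n (k + 1) | orderOf σ ∣ q}.ncard := by
  have hupper (j : Fin n) (hj : j ∈ Finset.Ioi (⟨k - 1, by omega⟩ : Fin n)) :
      {σ ∈ cosetFiber hkn j | orderOf σ ∣ q}.ncard =
        {σ ∈ cosetC n (k + 1) | orderOf σ ∣ q}.ncard :=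
    ncard_cosetFiber_of_le hk hkn
      (by have : k - 1 < (j : ℕ) := Fin.lt_def.1 (Finset.mem_Ioi.1 hj); omega) q
  rw [ncard_cosetC_eq_sum_fibers hkn, Finset.Ici_eq_cons_Ioi, Finset.sum_cons,
    ncard_cosetFiber_self hk hkn, Finset.sum_congr rfl hupper, Finset.sum_const, Fin.card_Ioi,
    smul_eq_mul, Fin.val_mk, show n - 1 - (k - 1) = n - k by omega]
end

section
/- For integers q, n, k with 1 ≤ k < n, the number of elements of C_{n,k} having no cycle of length exactly q satisfies: N̄(C_{n,k}) = [q ≠ k]·N̄(S_{n-k}) + (n-k)·N̄(C_{n,k+1}). -/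
/-- No cycle of length exactly q (fixed points count as cycles of length 1). -/
def NoCycleLenEq {n : ℕ} (q : ℕ) (σ : Equiv.Perm (Fin n)) : Prop :=
  ∀ x : Fin n, Function.minimalPeriod σ x ≠ q

open Equiv Function

theorem Function.Semiconj.minimalPeriod_eq {α β : Type*} {f : α → α} {g : β → β} {e : α → β}
    (he : Injective e) (h : Semiconj e f g) (x : α) :
    minimalPeriod g (e x) = minimalPeriod f x :=
  minimalPeriod_eq_minimalPeriod_iff.2 fun j => by
    simp only [IsPeriodicPt, IsFixedPt, ← (h.iterate_right j) x, he.eq_iff]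

theorem Function.minimalPeriod_eq_of_eqOn {α : Type*} {f g : α → α} {s : Set α}
    (hs : Set.MapsTo f s s) (h : Set.EqOn f g s) {x : α} (hx : x ∈ s) :
    minimalPeriod f x = minimalPeriod g x := by
  have hf : Semiconj Subtype.val (hs.restrict f s s) f := fun _ => rfl
  have hg : Semiconj Subtype.val (hs.restrict f s s) g := fun y => h y.2
  rw [← Subtype.coe_mk x hx, hf.minimalPeriod_eq Subtype.val_injective,
    hg.minimalPeriod_eq Subtype.val_injective]

theorem Function.minimalPeriod_eq_of_isPeriodicPt_iff {α : Type*} {f : α → α} {x : α} {k : ℕ}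
    (h : ∀ j, IsPeriodicPt f j x ↔ k ∣ j) : minimalPeriod f x = k :=
  Nat.dvd_antisymm (isPeriodicPt_iff_minimalPeriod_dvd.1 ((h k).2 dvd_rfl))
    ((h _).1 (isPeriodicPt_minimalPeriod f x))

theorem Equiv.Perm.minimalPeriod_conj_apply {α : Type*} (π σ : Perm α) (x : α) :
    minimalPeriod (⇑(π * σ * π⁻¹)) (π x) = minimalPeriod σ x :=
  Semiconj.minimalPeriod_eq π.injective (fun y => by simp) x

def initCycle (n k : ℕ) : Perm (Fin n) := ((List.finRange n).take k).formPerm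

theorem initCycle_apply_of_le {n k : ℕ} {x : Fin n} (hx : k ≤ (x : ℕ)) : initCycle n k x = x :=
  List.formPerm_apply_of_notMem fun hmem => by
    obtain ⟨i, hi, rfl⟩ := List.mem_iff_getElem.1 hmem
    simp only [List.length_take, List.length_finRange, lt_inf_iff, List.getElem_take,
      List.getElem_finRange, Fin.cast_mk] at hi hx
    omega

theorem initCycle_pow_apply_of_lt {n k : ℕ} (hkn : k ≤ n) (j : ℕ) {x : Fin n} (hx : (x : ℕ) < k) :
    ((initCycle n k ^ j) x : ℕ) = ((x : ℕ) + j) % k := by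
  have hl : ((List.finRange n).take k).length = k := by simpa using hkn
  have h := List.formPerm_pow_apply_getElem _
    ((List.nodup_finRange n).sublist (List.take_sublist _ _)) j x (hl ▸ hx)
  simp only [List.getElem_take, List.getElem_finRange, Fin.cast_mk, Fin.eta, hl] at h
  simp [initCycle, h]

theorem minimalPeriod_initCycle {n k : ℕ} (hkn : k ≤ n) {x : Fin n} (hx : (x : ℕ) < k) :
    minimalPeriod (initCycle n k) x = k := by
  refine minimalPeriod_eq_of_isPeriodicPt_iff fun j => ?_
  rw [IsPeriodicPt, IsFixedPt, Perm.iterate_eq_pow, Fin.ext_iff, initCycle_pow_apply_of_lt hkn j hx]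
  rw [← Nat.add_modEq_left_iff, Nat.ModEq, Nat.mod_eq_of_lt hx]

theorem initCycle_succ {n k : ℕ} {a b : Fin n} (ha : (a : ℕ) + 1 = k) (hb : (b : ℕ) = k) :
    initCycle n (k + 1) = initCycle n k * swap a b := by
  subst ha
  have hbn : (a : ℕ) + 1 < n := hb ▸ b.2
  have h1 : (List.finRange n).take (a + 1) = (List.finRange n).take a ++ [a] := by
    simp [List.take_add_one]
  have h2 : (List.finRange n).take (a + 1 + 1) = (List.finRange n).take a ++ [a, b] := by
    rw [List.take_add_one, h1, List.getElem?_eq_getElem (by simpa using hbn)]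
    simp [Fin.ext_iff, hb]
  simp only [initCycle, h1, h2, List.formPerm_append_pair]

theorem mem_cosetC_iff {n k : ℕ} {σ : Perm (Fin n)} :
    σ ∈ cosetC n k ↔ ∀ i : Fin n, (i : ℕ) < k - 1 → (σ * (initCycle n k)⁻¹) i = i :=
  ⟨fun ⟨g, hg, hσ⟩ => by rwa [hσ, initCycle, mul_inv_cancel_right],
    fun h => ⟨_, h, by simp [initCycle]⟩⟩

theorem Equiv.Perm.forall_mem_insert_swap_mul_apply_iff {α : Type*} [DecidableEq α] {g : Perm α}
    {s : Set α} {a m : α} (ha : a ∉ s) (hm : m ∉ s) :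
    (∀ i ∈ insert a s, (swap a m * g) i = i) ↔ (∀ i ∈ s, g i = i) ∧ g a = m := by
  simp only [Set.forall_mem_insert, Perm.mul_apply, swap_apply_eq_iff, swap_apply_left]
  refine ⟨fun h => ⟨fun i hi => ?_, h.1⟩, fun h => ⟨h.2, fun i hi => ?_⟩⟩
  · rw [h.2 i hi, swap_apply_of_ne_of_ne (ne_of_mem_of_not_mem hi ha) (ne_of_mem_of_not_mem hi hm)]
  · rw [h.1 i hi, swap_apply_of_ne_of_ne (ne_of_mem_of_not_mem hi ha) (ne_of_mem_of_not_mem hi hm)]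

theorem mem_cosetC_and_apply_eq_iff {n k : ℕ} {a m : Fin n} (ha : (a : ℕ) + 1 = k)
    (hm : a ≤ m) {σ : Perm (Fin n)} :
    σ ∈ cosetC n k ∧ (σ * (initCycle n k)⁻¹) a = m ↔
      ∀ i : Fin n, (i : ℕ) < k → (swap a m * σ * (initCycle n k)⁻¹) i = i := by
  have h := Perm.forall_mem_insert_swap_mul_apply_iff (g := σ * (initCycle n k)⁻¹)
    (s := {i : Fin n | (i : ℕ) < k - 1}) (a := a) (m := m)
    (by simp only [Set.mem_ofPred_eq]; omega)
    (by rw [Fin.le_def] at hm; simp only [Set.mem_ofPred_eq]; omega)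
  simp only [Set.mem_insert_iff, Set.mem_ofPred_eq] at h
  rw [mem_cosetC_iff, ← h, mul_assoc]
  refine forall_congr' fun i => imp_congr_left ?_
  rw [Fin.ext_iff]
  omega

theorem le_mul_initCycle_inv_apply {n k : ℕ} {a : Fin n} (ha : (a : ℕ) + 1 = k)
    {σ : Perm (Fin n)} (hσ : σ ∈ cosetC n k) : a ≤ (σ * (initCycle n k)⁻¹) a := by
  set g := σ * (initCycle n k)⁻¹
  by_contra! hlt
  have hfix : g (g a) = g a := mem_cosetC_iff.1 hσ _ (by rw [Fin.lt_def] at hlt; omega)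
  rw [g.injective hfix] at hlt
  exact lt_irrefl _ hlt

-- `b ↦ a ↦ m ↦ b`; for `a = k - 1` and `b = k`, conjugation by it turns the cycle `(0 … k-1 k)`
-- into `(0 … k-2 m k-1)`.
def splicePerm {α : Type*} [DecidableEq α] (a b m : α) : Perm α := swap a m * swap b m

theorem initCycle_commute_swap {n k : ℕ} {b m : Fin n} (hb : k ≤ (b : ℕ)) (hm : k ≤ (m : ℕ)) :
    Commute (initCycle n k) (swap b m) := by
  rw [Commute, SemiconjBy, mul_swap_eq_swap_mul, initCycle_apply_of_le hb,
    initCycle_apply_of_le hm]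

theorem swap_mul_splicePerm_conj_mul_initCycle_inv {n k : ℕ} {a b m : Fin n} (ha : (a : ℕ) + 1 = k)
    (hb : (b : ℕ) = k) (hm : k ≤ (m : ℕ)) (σ : Perm (Fin n)) :
    swap a m * (splicePerm a b m * σ * (splicePerm a b m)⁻¹) * (initCycle n k)⁻¹ =
      swap b m * (σ * (initCycle n (k + 1))⁻¹) * swap b m := by
  have hab : a ≠ b := fun h => by rw [Fin.ext_iff] at h; omega
  have ham : a ≠ m := fun h => by rw [Fin.ext_iff] at h; omega
  have hswap : swap b m * swap a m = swap a b * swap b m := by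
    have h := swap_mul_swap_mul_swap ham hab
    rw [swap_comm m b, swap_comm b a] at h
    rw [← h]
    simp [mul_assoc]
  have hc := (initCycle_commute_swap (n := n) hb.ge hm).inv_left
  rw [initCycle_succ ha hb, splicePerm]
  simp only [mul_inv_rev, swap_inv, mul_assoc, swap_mul_self_mul, hc.eq]
  rw [← mul_assoc (swap b m) (swap a m), hswap]
  simp only [mul_assoc]

theorem splicePerm_conj_mem_cosetC_iff {n k : ℕ} {a b m : Fin n} (ha : (a : ℕ) + 1 = k)
    (hb : (b : ℕ) = k) (hm : k ≤ (m : ℕ)) {σ : Perm (Fin n)} :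
    splicePerm a b m * σ * (splicePerm a b m)⁻¹ ∈ cosetC n k ∧
        (splicePerm a b m * σ * (splicePerm a b m)⁻¹ * (initCycle n k)⁻¹) a = m ↔
      σ ∈ cosetC n (k + 1) := by
  rw [mem_cosetC_and_apply_eq_iff ha (by rw [Fin.le_def]; omega),
    swap_mul_splicePerm_conj_mul_initCycle_inv ha hb hm, mem_cosetC_iff, Nat.add_sub_cancel]
  refine forall_congr' fun i => forall_congr' fun hi => ?_
  have hbi : i ≠ b := fun h => by rw [Fin.ext_iff] at h; omega
  have hmi : i ≠ m := fun h => by rw [Fin.ext_iff] at h; omega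
  rw [Perm.mul_apply, Perm.mul_apply, swap_apply_of_ne_of_ne hbi hmi, swap_apply_eq_iff,
    swap_apply_of_ne_of_ne hbi hmi]

def finSubEquivGE {n k : ℕ} (hkn : k ≤ n) : Fin (n - k) ≃ {x : Fin n // k ≤ (x : ℕ)} where
  toFun j := ⟨⟨k + j, by omega⟩, by simp⟩
  invFun x := ⟨x.1 - k, by have := x.1.2; omega⟩
  left_inv j := by ext; simp
  right_inv x := by ext; have := x.2; simp only; omega

def withInitCycle {n k : ℕ} (hkn : k ≤ n) (τ : Perm (Fin (n - k))) : Perm (Fin n) :=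
  Perm.ofSubtype ((finSubEquivGE hkn).permCongr τ) * initCycle n k

theorem withInitCycle_injective {n k : ℕ} (hkn : k ≤ n) : Injective (withInitCycle hkn) :=
  fun _ _ h => (finSubEquivGE hkn).permCongr.injective
    (Perm.ofSubtype_injective (mul_right_cancel h))

theorem range_withInitCycle {n k : ℕ} (hkn : k ≤ n) :
    Set.range (withInitCycle hkn) =
      {σ | ∀ i : Fin n, (i : ℕ) < k → (σ * (initCycle n k)⁻¹) i = i} := by
  ext σ
  refine ⟨?_, fun h => ?_⟩
  · rintro ⟨τ, rfl⟩ i hi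
    rw [withInitCycle, mul_inv_cancel_right]
    exact Perm.ofSubtype_apply_of_not_mem _ (by omega)
  · obtain ⟨f, hf⟩ := (Perm.subtypeEquivSubtypePerm _).surjective
      ⟨σ * (initCycle n k)⁻¹, fun i hi => h i (not_le.1 hi)⟩
    refine ⟨(finSubEquivGE hkn).permCongr.symm f, ?_⟩
    rw [withInitCycle, Equiv.apply_symm_apply, ← eq_mul_inv_iff_mul_eq]
    simpa using congrArg Subtype.val hf

theorem minimalPeriod_withInitCycle_of_lt {n k : ℕ} (hkn : k ≤ n) (τ : Perm (Fin (n - k)))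
    {x : Fin n} (hx : (x : ℕ) < k) : minimalPeriod (withInitCycle hkn τ) x = k := by
  have hmaps : Set.MapsTo (initCycle n k) {i | (i : ℕ) < k} {i | (i : ℕ) < k} := fun i hi => by
    have h := initCycle_pow_apply_of_lt hkn 1 hi
    rw [pow_one] at h
    show ((initCycle n k i : Fin n) : ℕ) < k
    exact h ▸ Nat.mod_lt _ (by omega)
  refine (minimalPeriod_eq_of_eqOn hmaps (fun i hi => ?_) hx).symm.trans
    (minimalPeriod_initCycle hkn hx)
  have hi' : ((initCycle n k i : Fin n) : ℕ) < k := hmaps hi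
  exact (Perm.ofSubtype_apply_of_not_mem _ (by omega)).symm

theorem minimalPeriod_withInitCycle_apply {n k : ℕ} (hkn : k ≤ n) (τ : Perm (Fin (n - k)))
    (y : Fin (n - k)) :
    minimalPeriod (withInitCycle hkn τ) (finSubEquivGE hkn y) = minimalPeriod τ y := by
  refine Semiconj.minimalPeriod_eq (Subtype.val_injective.comp (finSubEquivGE hkn).injective)
    (fun z => ?_) y
  simp [withInitCycle, initCycle_apply_of_le (finSubEquivGE hkn z).2]

theorem noCycleLenEq_withInitCycle_iff {n k : ℕ} (q : ℕ) (hk : 1 ≤ k) (hkn : k ≤ n)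
    (τ : Perm (Fin (n - k))) :
    NoCycleLenEq q (withInitCycle hkn τ) ↔ q ≠ k ∧ NoCycleLenEq q τ := by
  refine ⟨fun h => ⟨fun hq => ?_, fun y => ?_⟩, fun ⟨hq, hτ⟩ x => ?_⟩
  · exact h ⟨0, by omega⟩ ((minimalPeriod_withInitCycle_of_lt hkn τ (by simp; omega)).trans hq.symm)
  · rw [← minimalPeriod_withInitCycle_apply hkn τ y]
    exact h _
  · by_cases hx : (x : ℕ) < k
    · rw [minimalPeriod_withInitCycle_of_lt hkn τ hx]
      exact Ne.symm hq
    · obtain ⟨y, hy⟩ := (finSubEquivGE hkn).surjective ⟨x, not_lt.1 hx⟩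
      rw [show x = finSubEquivGE hkn y by rw [hy], minimalPeriod_withInitCycle_apply]
      exact hτ y

theorem noCycleLenEq_conj_iff {n : ℕ} (q : ℕ) (π σ : Perm (Fin n)) :
    NoCycleLenEq q (π * σ * π⁻¹) ↔ NoCycleLenEq q σ := by
  rw [NoCycleLenEq, NoCycleLenEq, π.surjective.forall]
  simp only [Perm.minimalPeriod_conj_apply]

theorem inter_eq_image_withInitCycle {n k : ℕ} (q : ℕ) (hkn : k ≤ n) {a : Fin n}
    (ha : (a : ℕ) + 1 = k) :
    {σ ∈ cosetC n k | NoCycleLenEq q σ} ∩ {σ | (σ * (initCycle n k)⁻¹) a = a} =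
      withInitCycle hkn '' {τ | q ≠ k ∧ NoCycleLenEq q τ} := by
  ext σ
  have hfib : σ ∈ cosetC n k ∧ (σ * (initCycle n k)⁻¹) a = a ↔
      σ ∈ Set.range (withInitCycle hkn) := by
    rw [mem_cosetC_and_apply_eq_iff ha le_rfl, range_withInitCycle, swap_self, ← Perm.one_def,
      one_mul]
    rfl
  constructor
  · rintro ⟨⟨hσ, hq⟩, hσa⟩
    obtain ⟨τ, rfl⟩ := hfib.1 ⟨hσ, hσa⟩
    exact ⟨τ, (noCycleLenEq_withInitCycle_iff q (by omega) hkn τ).1 hq, rfl⟩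
  · rintro ⟨τ, hτ, rfl⟩
    obtain ⟨hσ, hσa⟩ := hfib.2 ⟨τ, rfl⟩
    exact ⟨⟨hσ, (noCycleLenEq_withInitCycle_iff q (by omega) hkn τ).2 hτ⟩, hσa⟩

theorem diff_eq_image_splicePerm_conj {n k : ℕ} (q : ℕ) {a b : Fin n} (ha : (a : ℕ) + 1 = k)
    (hb : (b : ℕ) = k) :
    {σ ∈ cosetC n k | NoCycleLenEq q σ} \ {σ | (σ * (initCycle n k)⁻¹) a = a} =
      (fun p : Fin n × Perm (Fin n) => splicePerm a b p.1 * p.2 * (splicePerm a b p.1)⁻¹) ''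
        ({m : Fin n | k ≤ (m : ℕ)} ×ˢ {σ ∈ cosetC n (k + 1) | NoCycleLenEq q σ}) := by
  ext σ
  constructor
  · rintro ⟨⟨hσ, hq⟩, hσa⟩
    set m := (σ * (initCycle n k)⁻¹) a
    have hm : k ≤ (m : ℕ) := by
      have h1 := le_mul_initCycle_inv_apply ha hσ
      have h2 : (m : ℕ) ≠ a := fun h => hσa (Fin.ext h)
      rw [Fin.le_def] at h1
      omega
    have hconj : splicePerm a b m * ((splicePerm a b m)⁻¹ * σ * splicePerm a b m) *
        (splicePerm a b m)⁻¹ = σ := by group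
    refine ⟨(m, (splicePerm a b m)⁻¹ * σ * splicePerm a b m), ⟨hm, ?_, ?_⟩, hconj⟩
    · apply (splicePerm_conj_mem_cosetC_iff ha hb hm).1
      rw [hconj]
      exact ⟨hσ, rfl⟩
    · rw [← noCycleLenEq_conj_iff q (splicePerm a b m), hconj]
      exact hq
  · rintro ⟨⟨m, σ'⟩, ⟨hm, hσ', hq⟩, rfl⟩
    dsimp only at hm hσ' hq ⊢
    obtain ⟨hσ, hσm⟩ := (splicePerm_conj_mem_cosetC_iff ha hb hm).2 hσ'
    refine ⟨⟨hσ, (noCycleLenEq_conj_iff q _ _).2 hq⟩, fun h => ?_⟩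
    have hma : (m : ℕ) = a := by rw [← hσm, h]
    have hmk : k ≤ (m : ℕ) := hm
    omega

theorem injOn_splicePerm_conj {n k : ℕ} {a b : Fin n} (ha : (a : ℕ) + 1 = k) (hb : (b : ℕ) = k) :
    Set.InjOn
      (fun p : Fin n × Perm (Fin n) => splicePerm a b p.1 * p.2 * (splicePerm a b p.1)⁻¹)
      ({m : Fin n | k ≤ (m : ℕ)} ×ˢ cosetC n (k + 1)) := by
  rintro ⟨m₁, σ₁⟩ ⟨hm₁, hσ₁⟩ ⟨m₂, σ₂⟩ ⟨hm₂, hσ₂⟩ h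
  dsimp only at hm₁ hσ₁ hm₂ hσ₂ h
  have hm : m₁ = m₂ := by
    rw [← ((splicePerm_conj_mem_cosetC_iff ha hb hm₁).2 hσ₁).2,
      ← ((splicePerm_conj_mem_cosetC_iff ha hb hm₂).2 hσ₂).2, h]
  subst hm
  rw [mul_left_cancel (mul_right_cancel h)]

theorem ncard_setOf_le_val {n k : ℕ} (hkn : k < n) : {m : Fin n | k ≤ (m : ℕ)}.ncard = n - k := by
  have h : {m : Fin n | k ≤ (m : ℕ)} = ↑(Finset.Ici (⟨k, hkn⟩ : Fin n)) := by
    ext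
    simp [Fin.le_def]
  rw [h, Set.ncard_coe_finset, Fin.card_Ici]

theorem stmt_6 (q n k : ℕ) (hk : 1 ≤ k) (hkn : k < n) :
    {σ ∈ cosetC n k | NoCycleLenEq q σ}.ncard =
      (if q ≠ k then 1 else 0) *
          {σ : Equiv.Perm (Fin (n - k)) | NoCycleLenEq q σ}.ncard +
        (n - k) * {σ ∈ cosetC n (k + 1) | NoCycleLenEq q σ}.ncard := by
  set a : Fin n := ⟨k - 1, by omega⟩
  have ha : (a : ℕ) + 1 = k := Nat.sub_add_cancel hk
  rw [← Set.ncard_inter_add_ncard_sdiff_eq_ncard _ {σ | (σ * (initCycle n k)⁻¹) a = a},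
    inter_eq_image_withInitCycle q hkn.le ha,
    Set.ncard_image_of_injective _ (withInitCycle_injective hkn.le),
    diff_eq_image_splicePerm_conj q ha (b := ⟨k, hkn⟩) rfl,
    ((injOn_splicePerm_conj ha rfl).mono (Set.prod_mono le_rfl fun _ h => h.1)).ncard_image,
    Set.ncard_prod, ncard_setOf_le_val hkn]
  by_cases hq : q = k <;> simp [hq]
end
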